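/- arXiv:1511.00752 — 2 statements merged into one kernel-verified Lean document; each statement's English description precedes it below -/
import Mathlib

section
/- Define Γ₅(r,ρ,w) = ∫₀^{2π} (w cos φ) / (4π (r² + ρ² - 2rρ cos φ + w²)^{3/2}) dφ. If r, ρ > 0 satisfy 1/4 ≤ ρ/r ≤ 16, then |Γ₅(r,ρ,w)| ≤ (c/r) · |w| / ((ρ-r)² + w²) for an absolute constant c. -/
open Real MeasureTheory

/-! After the substitution `r² + ρ² - 2rρ cos φ + w² = D + B (1 - cos φ)` with
`D = (ρ - r)² + w²` and `B = 2rρ`, the symmetries `φ ↦ 2π - φ` and `φ ↦ π - φ` fold the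
integral onto `[0, π/2]`, where the integrand becomes
`cos φ ((D + B (1 - cos φ))^{-3/2} - (D + B (1 + cos φ))^{-3/2})`.
The cancellation in this difference bounds it by `3 (D + B (1 - cos φ))^{-3/2}`, and
`1 - cos φ ≥ 2φ²/π²`. Since `∫₀^∞ (D + a φ²)^{-3/2} dφ = 1 / (D √a)`, this yields the
factor `1/√B`, which is `≲ 1/r` because `ρ ≥ r/4`. -/

theorem intervalIntegral.integral_zero_two_mul_eq_integral_add_reflect
    {E : Type*} [NormedAddCommGroup E] [NormedSpace ℝ E] {f : ℝ → E} {a : ℝ}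
    (hf : IntervalIntegrable f volume 0 (2 * a)) :
    ∫ x in 0..2 * a, f x = ∫ x in 0..a, (f x + f (2 * a - x)) := by
  have ha : a ∈ Set.uIcc 0 (2 * a) := by
    rw [Set.mem_uIcc]; rcases le_total 0 a with h | h
    exacts [.inl ⟨h, by linarith⟩, .inr ⟨by linarith, h⟩]
  have h₁ : IntervalIntegrable f volume 0 a := hf.mono_set (Set.uIcc_subset_uIcc_left ha)
  have h₂ : IntervalIntegrable f volume a (2 * a) := hf.mono_set (Set.uIcc_subset_uIcc_right ha)
  have h₃ : IntervalIntegrable (fun x ↦ f (2 * a - x)) volume 0 a := by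
    simpa [two_mul] using (h₂.comp_sub_left (2 * a)).symm
  rw [intervalIntegral.integral_add h₁ h₃, intervalIntegral.integral_comp_sub_left,
    ← intervalIntegral.integral_add_adjacent_intervals h₁ h₂]
  congr 2 <;> ring

theorem one_div_pow_three_sub_one_div_pow_three_le {β γ : ℝ} (hβ : 0 < β) (hβγ : β ≤ γ) :
    1 / β ^ 3 - 1 / γ ^ 3 ≤ 3 * (γ ^ 2 - β ^ 2) / (2 * β ^ 3 * γ ^ 2) := by
  have hγ : 0 < γ := hβ.trans_le hβγ
  rw [div_sub_div _ _ (by positivity) (by positivity),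
    div_le_div_iff₀ (by positivity) (by positivity)]
  have : 0 ≤ (γ - β) ^ 2 * (γ + 2 * β) * (β ^ 3 * γ ^ 2) := by
    have := sub_nonneg.2 hβγ; positivity
  nlinarith

theorem div_sqrt_pow_three_sub_div_sqrt_pow_three_le {c D B : ℝ} (hc₀ : 0 ≤ c) (hc₁ : c ≤ 1)
    (hD : 0 < D) (hB : 0 ≤ B) :
    c / √(D + B * (1 - c)) ^ 3 - c / √(D + B * (1 + c)) ^ 3 ≤ 3 / √(D + B * (1 - c)) ^ 3 := by
  have hs : 0 < D + B * (1 - c) := by nlinarith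
  have ht : D + B * (1 - c) ≤ D + B * (1 + c) := by nlinarith
  have hβ := sqrt_pos.2 hs
  have key := one_div_pow_three_sub_one_div_pow_three_le hβ (sqrt_le_sqrt ht)
  rw [sq_sqrt hs.le, sq_sqrt (hs.trans_le ht).le] at key
  calc c / √(D + B * (1 - c)) ^ 3 - c / √(D + B * (1 + c)) ^ 3
      = c * (1 / √(D + B * (1 - c)) ^ 3 - 1 / √(D + B * (1 + c)) ^ 3) := by ring
    _ ≤ c * (3 * (D + B * (1 + c) - (D + B * (1 - c))) /
          (2 * √(D + B * (1 - c)) ^ 3 * (D + B * (1 + c)))) := by gcongr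
    _ = 3 / √(D + B * (1 - c)) ^ 3 * (B * c ^ 2 / (D + B * (1 + c))) := by
        field_simp; ring
    _ ≤ 3 / √(D + B * (1 - c)) ^ 3 * 1 := by
        gcongr
        rw [div_le_one (by positivity)]
        nlinarith
    _ = 3 / √(D + B * (1 - c)) ^ 3 := mul_one _

theorem hasDerivAt_div_mul_sqrt {D a : ℝ} (hD : 0 < D) (ha : 0 ≤ a) (x : ℝ) :
    HasDerivAt (fun y ↦ y / (D * √(D + a * y ^ 2))) (1 / √(D + a * x ^ 2) ^ 3) x := by
  have hu : 0 < D + a * x ^ 2 := by positivity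
  have h := (hasDerivAt_id' x).fun_div
    ((((hasDerivAt_pow 2 x).const_mul a).const_add D).sqrt hu.ne' |>.const_mul D) (by positivity)
  refine h.congr_deriv ?_
  field_simp
  norm_num
  linear_combination 2 * sq_sqrt hu.le

theorem integral_one_div_sqrt_pow_three {D a : ℝ} (hD : 0 < D) (ha : 0 ≤ a) (b : ℝ) :
    ∫ x in 0..b, 1 / √(D + a * x ^ 2) ^ 3 = b / (D * √(D + a * b ^ 2)) := by
  have hcont : Continuous fun x : ℝ ↦ 1 / √(D + a * x ^ 2) ^ 3 :=
    continuous_const.div (by fun_prop) fun x ↦ by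
      have : 0 < D + a * x ^ 2 := by positivity
      positivity
  rw [intervalIntegral.integral_eq_sub_of_hasDerivAt (fun x _ ↦ hasDerivAt_div_mul_sqrt hD ha x)
    (hcont.intervalIntegrable _ _)]
  simp

theorem integral_one_div_sqrt_pow_three_le {D a b : ℝ} (hD : 0 < D) (ha : 0 < a) (hb : 0 ≤ b) :
    ∫ x in 0..b, 1 / √(D + a * x ^ 2) ^ 3 ≤ 1 / (D * √a) := by
  rw [integral_one_div_sqrt_pow_three hD ha.le]
  rcases hb.eq_or_lt with rfl | hb
  · simp; positivity
  calc b / (D * √(D + a * b ^ 2)) ≤ b / (D * √(a * b ^ 2)) := by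
        gcongr; linarith
    _ = 1 / (D * √a) := by
        rw [sqrt_mul ha.le, sqrt_sq hb.le]; field_simp

noncomputable def cosKernel (D B φ : ℝ) : ℝ := cos φ / √(D + B * (1 - cos φ)) ^ 3

namespace cosKernel

variable {D B : ℝ}

theorem continuous (hD : 0 < D) (hB : 0 ≤ B) : Continuous (cosKernel D B) :=
  continuous_cos.div (by fun_prop) fun φ ↦ by
    have : 0 < D + B * (1 - cos φ) := by nlinarith [cos_le_one φ]
    positivity

theorem two_pi_sub (φ : ℝ) : cosKernel D B (2 * π - φ) = cosKernel D B φ := by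
  simp only [cosKernel, cos_two_pi_sub]

theorem pi_sub (φ : ℝ) :
    cosKernel D B (π - φ) = -(cos φ / √(D + B * (1 + cos φ)) ^ 3) := by
  simp only [cosKernel, cos_pi_sub, sub_neg_eq_add, neg_div]

theorem integral_eq (hD : 0 < D) (hB : 0 ≤ B) :
    ∫ φ in 0..2 * π, cosKernel D B φ =
      2 * ∫ φ in 0..π / 2, (cosKernel D B φ + cosKernel D B (π - φ)) := by
  have hfold (a : ℝ) := intervalIntegral.integral_zero_two_mul_eq_integral_add_reflect
    ((continuous hD hB).intervalIntegrable 0 (2 * a))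
  rw [hfold π]
  simp only [two_pi_sub, ← two_mul, intervalIntegral.integral_const_mul]
  simpa [mul_div_cancel₀] using hfold (π / 2)

theorem add_pi_sub_nonneg (hD : 0 < D) (hB : 0 ≤ B) {φ : ℝ} (hφ : φ ∈ Set.Icc 0 (π / 2)) :
    0 ≤ cosKernel D B φ + cosKernel D B (π - φ) := by
  have hc : 0 ≤ cos φ := cos_nonneg_of_mem_Icc ⟨by linarith [pi_pos, hφ.1], hφ.2⟩
  have hs : 0 < D + B * (1 - cos φ) := by nlinarith [cos_le_one φ]
  rw [pi_sub, ← sub_eq_add_neg, sub_nonneg, cosKernel]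
  gcongr
  nlinarith

theorem add_pi_sub_le (hD : 0 < D) (hB : 0 ≤ B) {φ : ℝ} (hφ : φ ∈ Set.Icc 0 (π / 2)) :
    cosKernel D B φ + cosKernel D B (π - φ) ≤ 3 * (1 / √(D + 2 * B / π ^ 2 * φ ^ 2) ^ 3) := by
  have hc : 0 ≤ cos φ := cos_nonneg_of_mem_Icc ⟨by linarith [pi_pos, hφ.1], hφ.2⟩
  have hquad : 2 / π ^ 2 * φ ^ 2 ≤ 1 - cos φ := by
    have hφπ : |φ| ≤ π := by rw [abs_of_nonneg hφ.1]; linarith [hφ.2, pi_pos]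
    linarith [cos_le_one_sub_mul_cos_sq hφπ]
  have hu : D + 2 * B / π ^ 2 * φ ^ 2 ≤ D + B * (1 - cos φ) := by
    calc D + 2 * B / π ^ 2 * φ ^ 2 = D + B * (2 / π ^ 2 * φ ^ 2) := by ring
      _ ≤ D + B * (1 - cos φ) := by gcongr
  rw [pi_sub, ← sub_eq_add_neg, cosKernel, mul_one_div]
  refine (div_sqrt_pow_three_sub_div_sqrt_pow_three_le hc (cos_le_one φ) hD hB).trans ?_
  gcongr

theorem abs_integral_le (hD : 0 < D) (hB : 0 < B) :
    |∫ φ in 0..2 * π, cosKernel D B φ| ≤ 6 * π / (D * √(2 * B)) := by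
  have hπ := pi_pos
  have hnonneg : 0 ≤ ∫ φ in 0..π / 2, (cosKernel D B φ + cosKernel D B (π - φ)) :=
    intervalIntegral.integral_nonneg (by positivity) fun φ hφ ↦ add_pi_sub_nonneg hD hB.le hφ
  have hle : ∫ φ in 0..π / 2, (cosKernel D B φ + cosKernel D B (π - φ)) ≤
      3 * (1 / (D * √(2 * B / π ^ 2))) := by
    have hk := continuous hD hB.le
    have hbound : Continuous fun φ ↦ 3 * (1 / √(D + 2 * B / π ^ 2 * φ ^ 2) ^ 3) :=
      continuous_const.mul (continuous_const.div (by fun_prop) fun φ ↦ by positivity)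
    calc ∫ φ in 0..π / 2, (cosKernel D B φ + cosKernel D B (π - φ))
        ≤ ∫ φ in 0..π / 2, 3 * (1 / √(D + 2 * B / π ^ 2 * φ ^ 2) ^ 3) :=
          intervalIntegral.integral_mono_on (by positivity)
            ((hk.add (hk.comp (by fun_prop))).intervalIntegrable _ _)
            (hbound.intervalIntegrable _ _) fun φ hφ ↦ add_pi_sub_le hD hB.le hφ
      _ ≤ 3 * (1 / (D * √(2 * B / π ^ 2))) := by
          rw [intervalIntegral.integral_const_mul]
          gcongr
          exact integral_one_div_sqrt_pow_three_le hD (by positivity) (by positivity)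
  rw [integral_eq hD hB.le, abs_of_nonneg (by positivity)]
  calc 2 * ∫ φ in 0..π / 2, (cosKernel D B φ + cosKernel D B (π - φ))
      ≤ 2 * (3 * (1 / (D * √(2 * B / π ^ 2)))) := by gcongr
    _ = 6 * π / (D * √(2 * B)) := by
      rw [sqrt_div' _ (sq_nonneg π), sqrt_sq hπ.le]; field_simp; ring

end cosKernel

/-- Improved bound for `Γ₅`, the `cos φ`-weighted angular average of `∂_κ` of the
Newtonian kernel: for `1/4 ≤ ρ/r ≤ 16`,
`|Γ₅(r,ρ,w)| ≤ (c/r)·|w|/((ρ-r)² + w²)` for an absolute constant `c`. -/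
theorem Gamma5_bound :
    ∃ c : ℝ, 0 < c ∧ ∀ r ρ w : ℝ, 0 < r → 0 < ρ →
      1 / 4 ≤ ρ / r → ρ / r ≤ 16 →
      |∫ φ in (0 : ℝ)..(2 * π),
          (w * Real.cos φ) /
            (4 * π * (r ^ 2 + ρ ^ 2 - 2 * r * ρ * Real.cos φ + w ^ 2) ^ ((3 : ℝ) / 2))|
        ≤ (c / r) * (|w| / ((ρ - r) ^ 2 + w ^ 2)) := by
  refine ⟨3 / 2, by norm_num, fun r ρ w hr hρ hρr _ ↦ ?_⟩
  rcases eq_or_ne w 0 with rfl | hw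
  · simp
  set D := (ρ - r) ^ 2 + w ^ 2
  have hD : 0 < D := by positivity
  have hr_le : r ≤ √(2 * (2 * r * ρ)) := by
    rw [le_div_iff₀ hr] at hρr
    exact le_sqrt_of_sq_le (by nlinarith)
  have hintegrand (φ : ℝ) :
      w * cos φ / (4 * π * (r ^ 2 + ρ ^ 2 - 2 * r * ρ * cos φ + w ^ 2) ^ ((3 : ℝ) / 2)) =
        w / (4 * π) * cosKernel D (2 * r * ρ) φ := by
    have hS : r ^ 2 + ρ ^ 2 - 2 * r * ρ * cos φ + w ^ 2 = D + 2 * r * ρ * (1 - cos φ) := by ring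
    have : 0 ≤ D + 2 * r * ρ * (1 - cos φ) := by
      have := sub_nonneg.2 (cos_le_one φ); positivity
    rw [hS, rpow_div_two_eq_sqrt _ this, cosKernel]
    norm_cast
    ring
  simp_rw [hintegrand]
  rw [intervalIntegral.integral_const_mul, abs_mul, abs_div,
    abs_of_pos (by positivity : 0 < 4 * π)]
  calc |w| / (4 * π) * |∫ φ in 0..2 * π, cosKernel D (2 * r * ρ) φ|
      ≤ |w| / (4 * π) * (6 * π / (D * √(2 * (2 * r * ρ)))) := by
        gcongr; exact cosKernel.abs_integral_le hD (by positivity)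
    _ ≤ |w| / (4 * π) * (6 * π / (D * r)) := by gcongr
    _ = 3 / 2 / r * (|w| / D) := by field_simp; ring
end

section
/- Define Γ₃(r,ρ,w) = -∫₀^{2π} (ρ cos φ - r)(cos φ) / (4π (r² + ρ² - 2rρ cos φ + w²)^{3/2}) dφ. If 1/4 ≤ ρ/r ≤ 16, then |Γ₃(r,ρ,w)| ≤ c / (ρ √((ρ-r)² + w²)) for an absolute constant c. -/
/-!
Since `D = r² + ρ² - 2rρ cos φ + w² = (ρ cos φ - r)² + (ρ sin φ)² + w²`, the integrand is bounded
by `1 / (4πD)`. Shifting the period to `[-π, π]` and using `1 - cos φ ≥ 2φ²/π²` there,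
`D ≥ δ² + (kφ)²` with `δ = √((ρ - r)² + w²)` and `k = 2√(rρ)/π`, and the arctangent integral
`∫ dφ / (δ² + (kφ)²) ≤ π / (δk)` gives `|Γ₃| ≤ π / (8 √(rρ) δ)`. Finally `ρ ≤ 16r` means
`√(rρ) ≥ ρ/4`.
-/

open Real MeasureTheory

noncomputable def gamma3Integrand (r ρ w φ : ℝ) : ℝ :=
  ((ρ * cos φ - r) * cos φ) /
    (4 * π * (r ^ 2 + ρ ^ 2 - 2 * r * ρ * cos φ + w ^ 2) ^ ((3 : ℝ) / 2))

lemma rpow_three_halves_eq_mul_sqrt {x : ℝ} (hx : 0 ≤ x) : x ^ ((3 : ℝ) / 2) = x * √x := by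
  rw [sqrt_eq_rpow, show (3 : ℝ) / 2 = 1 + 1 / 2 by norm_num, rpow_add' hx (by norm_num),
    rpow_one]

lemma sq_sub_le_sq_dist (r ρ w φ : ℝ) :
    (ρ * cos φ - r) ^ 2 ≤ r ^ 2 + ρ ^ 2 - 2 * r * ρ * cos φ + w ^ 2 := by
  nlinarith [sin_sq_add_cos_sq φ, sq_nonneg (ρ * sin φ), sq_nonneg w]

lemma abs_gamma3Integrand_le (r ρ w φ : ℝ) :
    |gamma3Integrand r ρ w φ| ≤ (4 * π * (r ^ 2 + ρ ^ 2 - 2 * r * ρ * cos φ + w ^ 2))⁻¹ := by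
  set D := r ^ 2 + ρ ^ 2 - 2 * r * ρ * cos φ + w ^ 2
  have hsq : (ρ * cos φ - r) ^ 2 ≤ D := sq_sub_le_sq_dist r ρ w φ
  rcases (le_trans (sq_nonneg _) hsq).eq_or_lt with hD | hD
  · -- both sides are junk values `x / 0 = 0`
    simp [gamma3Integrand, D, ← hD]
  have hnum : |(ρ * cos φ - r) * cos φ| ≤ √D := by
    rw [abs_mul]
    calc |ρ * cos φ - r| * |cos φ| ≤ |ρ * cos φ - r| * 1 := by gcongr; exact abs_cos_le_one φ
      _ ≤ √D := by rw [mul_one]; exact abs_le_sqrt hsq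
  have hsD : 0 < √D := sqrt_pos.mpr hD
  rw [gamma3Integrand, abs_div, rpow_three_halves_eq_mul_sqrt hD.le,
    abs_of_pos (by positivity : (0 : ℝ) < 4 * π * (D * √D))]
  calc |(ρ * cos φ - r) * cos φ| / (4 * π * (D * √D)) ≤ √D / (4 * π * (D * √D)) := by gcongr
    _ = (4 * π * D)⁻¹ := by field_simp

lemma sq_dist_ge_of_abs_le_pi {r ρ φ : ℝ} (w : ℝ) (hr : 0 ≤ r) (hρ : 0 ≤ ρ) (hφ : |φ| ≤ π) :
    (ρ - r) ^ 2 + w ^ 2 + (2 * √(r * ρ) / π * φ) ^ 2 ≤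
      r ^ 2 + ρ ^ 2 - 2 * r * ρ * cos φ + w ^ 2 := by
  have hcos := mul_le_mul_of_nonneg_left (cos_le_one_sub_mul_cos_sq hφ)
    (by positivity : (0 : ℝ) ≤ 2 * r * ρ)
  have hsq : (2 * √(r * ρ) / π * φ) ^ 2 = 2 * r * ρ * (2 / π ^ 2 * φ ^ 2) := by
    rw [mul_pow, div_pow, mul_pow, sq_sqrt (by positivity)]
    field_simp
  linarith

lemma integral_inv_sq_add_mul_sq {δ k : ℝ} (hδ : 0 < δ) (hk : 0 < k) (s t : ℝ) :
    ∫ x in s..t, (δ ^ 2 + (k * x) ^ 2)⁻¹ = (arctan (k / δ * t) - arctan (k / δ * s)) / (δ * k) := by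
  have hscale (x : ℝ) : (δ ^ 2 + (k * x) ^ 2)⁻¹ = (δ ^ 2)⁻¹ * (1 + (k / δ * x) ^ 2)⁻¹ := by
    field_simp
  simp only [hscale, intervalIntegral.integral_const_mul,
    intervalIntegral.integral_comp_mul_left (fun x => (1 + x ^ 2)⁻¹) (by positivity : k / δ ≠ 0),
    integral_inv_one_add_sq, smul_eq_mul]
  field_simp

lemma integral_inv_sq_add_mul_sq_le {δ k : ℝ} (hδ : 0 < δ) (hk : 0 < k) (s t : ℝ) :
    ∫ x in s..t, (δ ^ 2 + (k * x) ^ 2)⁻¹ ≤ π / (δ * k) := by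
  rw [integral_inv_sq_add_mul_sq hδ hk]
  gcongr
  linarith [arctan_lt_pi_div_two (k / δ * t), neg_pi_div_two_lt_arctan (k / δ * s)]

lemma periodic_gamma3Integrand (r ρ w : ℝ) : Function.Periodic (gamma3Integrand r ρ w) (2 * π) := by
  intro φ
  simp only [gamma3Integrand, cos_add_two_pi]

lemma abs_integral_gamma3Integrand_le {r ρ : ℝ} (w : ℝ) (hr : 0 < r) (hρ : 0 < ρ)
    (hE : 0 < (ρ - r) ^ 2 + w ^ 2) :
    |∫ φ in (0 : ℝ)..2 * π, gamma3Integrand r ρ w φ| ≤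
      π / (8 * √(r * ρ) * √((ρ - r) ^ 2 + w ^ 2)) := by
  set δ := √((ρ - r) ^ 2 + w ^ 2)
  set k := 2 * √(r * ρ) / π
  have hδ : 0 < δ := sqrt_pos.mpr hE
  have hk : 0 < k := by positivity
  have hperiod := (periodic_gamma3Integrand r ρ w).intervalIntegral_add_eq 0 (-π)
  rw [zero_add, show -π + 2 * π = π by ring] at hperiod
  rw [hperiod, ← Real.norm_eq_abs]
  calc ‖∫ φ in -π..π, gamma3Integrand r ρ w φ‖
      ≤ ∫ φ in -π..π, (4 * π)⁻¹ * (δ ^ 2 + (k * φ) ^ 2)⁻¹ := by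
        refine intervalIntegral.norm_integral_le_of_norm_le (by linarith [pi_pos])
          (Filter.Eventually.of_forall fun φ hφ => ?_) (Continuous.intervalIntegrable ?_ _ _)
        · have hφ : |φ| ≤ π := abs_le.mpr ⟨hφ.1.le, hφ.2⟩
          rw [Real.norm_eq_abs, ← mul_inv, sq_sqrt hE.le]
          refine (abs_gamma3Integrand_le r ρ w φ).trans ?_
          gcongr (4 * π * ?_)⁻¹
          exact sq_dist_ge_of_abs_le_pi w hr.le hρ.le hφ
        · exact continuous_const.mul (by fun_prop (disch := intro; positivity))
    _ ≤ (4 * π)⁻¹ * (π / (δ * k)) := by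
        rw [intervalIntegral.integral_const_mul]
        gcongr
        exact integral_inv_sq_add_mul_sq_le hδ hk _ _
    _ = π / (8 * √(r * ρ) * δ) := by
        simp only [k]
        field_simp
        ring

lemma gamma3Integrand_self_eq {r : ℝ} (hr : 0 < r) (φ : ℝ) :
    gamma3Integrand r r 0 φ = -cos φ / (8 * π * r * √(2 * r ^ 2 * (1 - cos φ))) := by
  rcases (sub_nonneg.mpr (cos_le_one φ)).eq_or_lt with h | h
  · have hc : cos φ = 1 := by linarith
    simp [gamma3Integrand, hc]
  · have hD : r ^ 2 + r ^ 2 - 2 * r * r * cos φ + 0 ^ 2 = 2 * r ^ 2 * (1 - cos φ) := by ring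
    have hpos : 0 < 2 * r ^ 2 * (1 - cos φ) := by positivity
    have := sqrt_pos.mpr hpos
    rw [gamma3Integrand, hD, rpow_three_halves_eq_mul_sqrt hpos.le]
    field_simp
    ring

lemma inv_abs_le_abs_gamma3Integrand_self {r φ : ℝ} (hr : 0 < r) (hφ0 : φ ≠ 0) (hφ : |φ| < 1) :
    |φ|⁻¹ ≤ 16 * π * r ^ 2 * |gamma3Integrand r r 0 φ| := by
  have hcos_lower := one_sub_sq_div_two_le_cos (x := φ)
  have hcos_upper := cos_le_one_sub_mul_cos_sq (hφ.le.trans (by linarith [pi_gt_three]))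
  have hφsq : φ ^ 2 < 1 := by rw [← sq_abs]; nlinarith [abs_nonneg φ]
  have hcos_half : 1 / 2 ≤ cos φ := by linarith
  have hcos_lt_one : 0 < 1 - cos φ := by
    have : 0 < 2 / π ^ 2 * φ ^ 2 := by positivity
    linarith
  set s := √(2 * r ^ 2 * (1 - cos φ))
  have hs : s ≤ r * |φ| := by
    rw [sqrt_le_left (by positivity)]
    nlinarith [sq_abs φ]
  have hs_pos : 0 < s := by positivity
  rw [gamma3Integrand_self_eq hr, abs_div, abs_neg, abs_of_pos (by linarith : 0 < cos φ),
    abs_of_pos (by positivity : 0 < 8 * π * r * s), inv_le_iff_one_le_mul₀' (abs_pos.mpr hφ0),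
    ← mul_div_assoc, ← mul_div_assoc, one_le_div (by positivity)]
  nlinarith [mul_le_mul_of_nonneg_left hs (by positivity : (0 : ℝ) ≤ 8 * π * r),
    mul_le_mul_of_nonneg_left hcos_half (by positivity : (0 : ℝ) ≤ 16 * π * r ^ 2 * |φ|)]

lemma not_intervalIntegrable_gamma3Integrand_self {r : ℝ} (hr : 0 < r) :
    ¬ IntervalIntegrable (gamma3Integrand r r 0) volume 0 (2 * π) := by
  refine not_intervalIntegrable_of_sub_inv_isBigO_punctured (c := 0) ?_
    (by positivity) Set.left_mem_uIcc
  refine Asymptotics.IsBigO.of_bound (16 * π * r ^ 2) ?_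
  have hnear : Set.Ioo (-1 : ℝ) 1 ∈ nhdsWithin (0 : ℝ) {0}ᶜ :=
    nhdsWithin_le_nhds (Ioo_mem_nhds (by norm_num) (by norm_num))
  filter_upwards [hnear, self_mem_nhdsWithin] with φ hφ hφ0
  rw [sub_zero, norm_inv, Real.norm_eq_abs, Real.norm_eq_abs]
  exact inv_abs_le_abs_gamma3Integrand_self hr hφ0 (abs_lt.mpr hφ)

/-- Improved bound for `Γ₃`, the `cos φ`-weighted angular average of `∂_ρ` of the
Newtonian kernel: for `1/4 ≤ ρ/r ≤ 16`,
`|Γ₃(r,ρ,w)| ≤ c/(ρ√((ρ-r)² + w²))` for an absolute constant `c`. -/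
theorem Gamma3_bound :
    ∃ c : ℝ, 0 < c ∧ ∀ r ρ w : ℝ, 0 < r → 0 < ρ →
      1 / 4 ≤ ρ / r → ρ / r ≤ 16 →
      |-∫ φ in (0 : ℝ)..(2 * π),
          ((ρ * Real.cos φ - r) * Real.cos φ) /
            (4 * π * (r ^ 2 + ρ ^ 2 - 2 * r * ρ * Real.cos φ + w ^ 2) ^ ((3 : ℝ) / 2))|
        ≤ c / (ρ * Real.sqrt ((ρ - r) ^ 2 + w ^ 2)) := by
  refine ⟨2, two_pos, fun r ρ w hr hρ _ hρr => ?_⟩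
  rw [abs_neg]
  change |∫ φ in (0 : ℝ)..2 * π, gamma3Integrand r ρ w φ| ≤ _
  rcases (add_nonneg (sq_nonneg (ρ - r)) (sq_nonneg w)).eq_or_lt with hE | hE
  · -- the bound is `2 / 0 = 0`; it holds because the integrand is `≍ 1/|φ|` near `0`, so not
    -- integrable, and the integral is the junk value `0`
    obtain ⟨rfl, rfl⟩ : ρ = r ∧ w = 0 := by
      constructor <;> nlinarith [sq_nonneg (ρ - r), sq_nonneg w]
    rw [intervalIntegral.integral_undef (not_intervalIntegrable_gamma3Integrand_self hr)]
    simp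
  · have hρ4 : ρ / 4 ≤ √(r * ρ) :=
      le_sqrt_of_sq_le (by nlinarith [(div_le_iff₀ hr).mp hρr])
    set δ := √((ρ - r) ^ 2 + w ^ 2)
    have hδ : 0 < δ := sqrt_pos.mpr hE
    calc _ ≤ π / (8 * √(r * ρ) * δ) := abs_integral_gamma3Integrand_le w hr hρ hE
      _ ≤ 2 / (ρ * δ) := by
          rw [div_le_div_iff₀ (by positivity) (by positivity)]
          nlinarith [mul_le_mul_of_nonneg_right pi_le_four (by positivity : (0 : ℝ) ≤ ρ * δ),
            mul_le_mul_of_nonneg_right hρ4 hδ.le]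
end
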